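/- arXiv:1806.08770 — 6 statements merged into one kernel-verified Lean document; each statement's English description precedes it below -/
import Mathlib

section
/- Let G = (P, E) be a geometric graph on a finite point set P such that every pair of vertices is connected by an xy-monotone path in G. If p, q ∈ P are rectangularly visible in P, then the segment pq is an edge of G. -/
open scoped BigOperators

noncomputable section

/-- A point in the Euclidean plane. -/
abbrev Pt : Type := EuclideanSpace ℝ (Fin 2)

noncomputable instance : DecidableEq Pt := Classical.decEq _

/-- A real sequence is monotone (increasing or decreasing) on indices `0..t`. -/
def MonoTo (f : ℕ → ℝ) (t : ℕ) : Prop :=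
  (∀ i j : ℕ, i ≤ j → j ≤ t → f i ≤ f j) ∨ (∀ i j : ℕ, i ≤ j → j ≤ t → f j ≤ f i)

/-- A point sequence is `y`-monotone on indices `0..t`. -/
def YMono (q : ℕ → Pt) (t : ℕ) : Prop := MonoTo (fun i => q i 1) t

/-- A point sequence is `xy`-monotone on indices `0..t`. -/
def XYMono (q : ℕ → Pt) (t : ℕ) : Prop :=
  MonoTo (fun i => q i 0) t ∧ MonoTo (fun i => q i 1) t

/-- `E` is the edge set of a geometric graph with vertex set `P` (no loops). -/
def IsGraphOn (P : Finset Pt) (E : Finset (Sym2 Pt)) : Prop :=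
  ∀ p q : Pt, s(p, q) ∈ E → p ∈ P ∧ q ∈ P ∧ p ≠ q

/-- `w 0, …, w t` is a path of `E` from `a` to `b`. -/
def IsPathBetween (E : Finset (Sym2 Pt)) (w : ℕ → Pt) (t : ℕ) (a b : Pt) : Prop :=
  w 0 = a ∧ w t = b ∧ ∀ i : ℕ, i < t → s(w i, w (i + 1)) ∈ E

/-- `a` and `b` are connected by a `y`-monotone path of `E`. -/
def ConnYMono (E : Finset (Sym2 Pt)) (a b : Pt) : Prop :=
  ∃ w t, IsPathBetween E w t a b ∧ YMono w t

/-- `a` and `b` are connected by an `xy`-monotone path of `E`. -/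
def ConnXYMono (E : Finset (Sym2 Pt)) (a b : Pt) : Prop :=
  ∃ w t, IsPathBetween E w t a b ∧ XYMono w t

/-- Cost of a geometric graph: sum of Euclidean lengths of edges. -/
def cost (E : Finset (Sym2 Pt)) : ℝ :=
  ∑ e ∈ E, Sym2.lift ⟨fun p q => dist p q, fun p q => dist_comm p q⟩ e

/-- Closed axis-aligned rectangle with corners `p` and `q`. -/
def Rect (p q : Pt) : Set Pt :=
  {z | min (p 0) (q 0) ≤ z 0 ∧ z 0 ≤ max (p 0) (q 0) ∧
       min (p 1) (q 1) ≤ z 1 ∧ z 1 ≤ max (p 1) (q 1)}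

/-- `p` and `q` are rectangularly visible in `P`. -/
def RectVisible (P : Finset Pt) (p q : Pt) : Prop :=
  ∀ r ∈ P, r ∈ Rect p q → r = p ∨ r = q

/-- Adjacency in the rectangle of influence graph of `P`. -/
def RIGAdj (P : Finset Pt) (a b : Pt) : Prop :=
  a ∈ P ∧ b ∈ P ∧ a ≠ b ∧ RectVisible P a b

/-- A spanning graph on vertex set `V` in which every root in `R` is connected
to every vertex by a `y`-monotone path. -/
def RootedSpan (V R : Finset Pt) (E : Finset (Sym2 Pt)) : Prop :=
  IsGraphOn V E ∧ ∀ r ∈ R, ∀ p ∈ V, ConnYMono E r p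

/-- `E` is a minimum-cost rooted `y`-monotone spanning graph of `V` with roots `R`. -/
def IsMinRooted (V R : Finset Pt) (E : Finset (Sym2 Pt)) : Prop :=
  RootedSpan V R E ∧ ∀ E', RootedSpan V R E' → cost E ≤ cost E'

/-- First rotated coordinate (rotation of axes by angle `θ`). -/
def rotX (θ : ℝ) (z : Pt) : ℝ := Real.cos θ * z 0 + Real.sin θ * z 1

/-- Second rotated coordinate (rotation of axes by angle `θ`). -/
def rotY (θ : ℝ) (z : Pt) : ℝ := -Real.sin θ * z 0 + Real.cos θ * z 1

/-- Closed rectangle with corners `p`, `q` w.r.t. the axes rotated by `θ`. -/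
def RectRot (θ : ℝ) (p q : Pt) : Set Pt :=
  {z | min (rotX θ p) (rotX θ q) ≤ rotX θ z ∧ rotX θ z ≤ max (rotX θ p) (rotX θ q) ∧
       min (rotY θ p) (rotY θ q) ≤ rotY θ z ∧ rotY θ z ≤ max (rotY θ p) (rotY θ q)}

/-- Points of `P` rectangularly visible from `p` w.r.t. the axes rotated by `θ`. -/
def RVrot (θ : ℝ) (P : Finset Pt) (p : Pt) : Set Pt :=
  {q | q ∈ P ∧ q ≠ p ∧ ∀ r ∈ P, r ∈ RectRot θ p q → r = p ∨ r = q}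

/-- Adjacency in the rectangle of influence graph of `P` w.r.t. the axes rotated by `θ`. -/
def RIGrotAdj (θ : ℝ) (P : Finset Pt) (a b : Pt) : Prop :=
  a ∈ P ∧ b ∈ P ∧ a ≠ b ∧ ∀ r ∈ P, r ∈ RectRot θ a b → r = a ∨ r = b

lemma monoTo_between {f : ℕ → ℝ} {t : ℕ} (h : MonoTo f t) (ht : 1 ≤ t) :
    min (f 0) (f t) ≤ f 1 ∧ f 1 ≤ max (f 0) (f t) := by
  rcases h with h | h
  · have h1 := h 0 1 (by omega) ht
    have h2 := h 1 t ht le_rfl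
    constructor
    · exact le_trans (min_le_left _ _) h1
    · exact le_trans h2 (le_max_right _ _)
  · have h1 := h 0 1 (by omega) ht
    have h2 := h 1 t ht le_rfl
    constructor
    · exact le_trans (min_le_right _ _) h2
    · exact le_trans h1 (le_max_left _ _)

/-- in an `xy`-monotone graph, rectangularly visible pairs are adjacent. -/
theorem rectVisible_mem_edges (P : Finset Pt) (E : Finset (Sym2 Pt))
    (hE : IsGraphOn P E)
    (hconn : ∀ a ∈ P, ∀ b ∈ P, ConnXYMono E a b)
    (p q : Pt) (hp : p ∈ P) (hq : q ∈ P) (hpq : p ≠ q)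
    (hvis : RectVisible P p q) :
    s(p, q) ∈ E := by
  obtain ⟨w, t, ⟨hw0, hwt, hedge⟩, hx, hy⟩ := hconn p hp q hq
  have ht : 1 ≤ t := by
    by_contra h
    have : t = 0 := by omega
    subst this; exact hpq (hw0 ▸ hwt ▸ rfl)
  have he := hedge 0 (by omega)
  have h1P := (hE _ _ he).2.1
  have h1ne : w 1 ≠ p := by
    intro h; exact (hE _ _ he).2.2 (by rw [hw0, h])
  have hxb := monoTo_between hx ht
  have hyb := monoTo_between hy ht
  simp only [hw0] at he hxb hyb
  have hrect : w 1 ∈ Rect p q := by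
    constructor
    · simpa [hw0, hwt] using hxb.1
    refine ⟨by simpa [hw0, hwt] using hxb.2, ?_, ?_⟩
    · simpa [hw0, hwt] using hyb.1
    · simpa [hw0, hwt] using hyb.2
  rcases hvis (w 1) h1P hrect with h | h
  · exact absurd h h1ne
  · rwa [h] at he
end
end

section
/- Let P be a finite point set in the plane. In the rectangle of influence graph of P, every pair of distinct points p, q ∈ P is connected by an xy-monotone path all of whose vertices lie inside the closed axis-aligned rectangle with corners p and q. -/
/-! Strong induction on the number of points of `P` in `Rect p q`. Among the points `r ≠ p` of `P`
in `Rect p q`, one whose rectangle `Rect p r` holds the fewest points of `P` is adjacent to `p`: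
any other point `z` of `Rect p r` would give `Rect p z ⊆ Rect p r` with `r` missing. Since `r` lies
between `p` and `q` in both coordinates, prepending `p` to a path from `r` to `q` inside
`Rect r q ⊆ Rect p q` (a rectangle that misses `p`) gives the required path. -/

open scoped BigOperators

noncomputable section

open Finset

lemma mem_rect_iff {p q z : Pt} :
    z ∈ Rect p q ↔ z 0 ∈ Set.uIcc (p 0) (q 0) ∧ z 1 ∈ Set.uIcc (p 1) (q 1) :=
  and_assoc.symm

lemma left_mem_rect (p q : Pt) : p ∈ Rect p q :=
  mem_rect_iff.2 ⟨Set.left_mem_uIcc, Set.left_mem_uIcc⟩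

lemma right_mem_rect (p q : Pt) : q ∈ Rect p q :=
  mem_rect_iff.2 ⟨Set.right_mem_uIcc, Set.right_mem_uIcc⟩

lemma rect_comm (p q : Pt) : Rect p q = Rect q p := by
  ext z
  simp only [mem_rect_iff, Set.uIcc_comm]

lemma rect_subset_rect_left {p q r : Pt} (hr : r ∈ Rect p q) : Rect p r ⊆ Rect p q := by
  intro z hz
  rw [mem_rect_iff] at hr hz ⊢
  exact ⟨Set.uIcc_subset_uIcc_left hr.1 hz.1, Set.uIcc_subset_uIcc_left hr.2 hz.2⟩

lemma rect_subset_rect_right {p q r : Pt} (hr : r ∈ Rect p q) : Rect r q ⊆ Rect p q := by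
  intro z hz
  rw [mem_rect_iff] at hr hz ⊢
  exact ⟨Set.uIcc_subset_uIcc_right hr.1 hz.1, Set.uIcc_subset_uIcc_right hr.2 hz.2⟩

lemma eq_of_mem_rect_of_mem_rect {p q r : Pt} (hr : r ∈ Rect p q) (hq : q ∈ Rect p r) :
    r = q := by
  rw [mem_rect_iff] at hr hq
  ext i
  fin_cases i
  · exact Set.eq_of_mem_uIcc_of_mem_uIcc' hr.1 hq.1
  · exact Set.eq_of_mem_uIcc_of_mem_uIcc' hr.2 hq.2

section MonotoneUpTo

variable {α : Type*} [Preorder α] {f : ℕ → α} {t : ℕ}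

lemma monotoneUpTo_of_antitoneUpTo (hf : ∀ i j, i ≤ j → j ≤ t → f j ≤ f i) (h : f 0 ≤ f t) :
    ∀ i j, i ≤ j → j ≤ t → f i ≤ f j := fun i j hij hjt =>
  (hf 0 i i.zero_le (hij.trans hjt)).trans (h.trans (hf j t hjt le_rfl))

-- `Stream' α` is `ℕ → α`, so `Stream'.cons a f` is the sequence `f` with `a` prepended.
lemma monotoneUpTo_cons {a : α} (hf : ∀ i j, i ≤ j → j ≤ t → f i ≤ f j) (ha : a ≤ f 0) :
    ∀ i j, i ≤ j → j ≤ t + 1 → Stream'.cons a f i ≤ Stream'.cons a f j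
  | 0, 0, _, _ => le_rfl
  | 0, j + 1, _, hj => ha.trans (hf 0 j j.zero_le (by omega))
  | i + 1, j + 1, hij, hj => hf i j (by omega) (by omega)

end MonotoneUpTo

lemma MonoTo.const (a : ℝ) (t : ℕ) : MonoTo (fun _ => a) t :=
  Or.inl fun _ _ _ _ => le_rfl

lemma MonoTo.cons {a : ℝ} {f : ℕ → ℝ} {t : ℕ} (hf : MonoTo f t)
    (ha : f 0 ∈ Set.uIcc a (f t)) : MonoTo (Stream'.cons a f) (t + 1) := by
  rcases le_total a (f t) with h | h
  · rw [Set.uIcc_of_le h] at ha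
    have hup := hf.elim id fun hdown => monotoneUpTo_of_antitoneUpTo hdown ha.2
    exact Or.inl (monotoneUpTo_cons hup ha.1)
  · rw [Set.uIcc_of_ge h] at ha
    have hdown := hf.elim (fun hup => monotoneUpTo_of_antitoneUpTo (α := ℝᵒᵈ) hup ha.1) id
    exact Or.inr (monotoneUpTo_cons (α := ℝᵒᵈ) hdown ha.2)

lemma cons_apply_coord (p : Pt) (w : ℕ → Pt) (k : Fin 2) :
    (fun i => Stream'.cons p w i k) = Stream'.cons (p k) fun i => w i k :=
  Stream'.map_cons (fun z : Pt => z k) p w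

def IsMonotoneRIGPath (P : Finset Pt) (p q : Pt) (w : ℕ → Pt) (t : ℕ) : Prop :=
  w 0 = p ∧ w t = q ∧ (∀ i : ℕ, i < t → RIGAdj P (w i) (w (i + 1))) ∧
    XYMono w t ∧ ∀ i : ℕ, i ≤ t → w i ∈ Rect p q

lemma isMonotoneRIGPath_const (P : Finset Pt) (p : Pt) :
    IsMonotoneRIGPath P p p (fun _ => p) 0 :=
  ⟨rfl, rfl, by simp, ⟨MonoTo.const _ _, MonoTo.const _ _⟩, fun _ _ => left_mem_rect p p⟩

lemma IsMonotoneRIGPath.cons {P : Finset Pt} {p q r : Pt} {w : ℕ → Pt} {t : ℕ}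
    (hw : IsMonotoneRIGPath P r q w t) (hpr : RIGAdj P p r) (hr : r ∈ Rect p q) :
    IsMonotoneRIGPath P p q (Stream'.cons p w) (t + 1) := by
  obtain ⟨hw0, hwt, hadj, ⟨hx, hy⟩, hrect⟩ := hw
  have hr' := mem_rect_iff.1 hr
  rw [← hw0, ← hwt] at hr'
  refine ⟨rfl, hwt, ?_, ⟨?_, ?_⟩, ?_⟩
  · rintro (_ | i) hi
    · rwa [← hw0] at hpr
    · exact hadj i (by omega)
  · rw [cons_apply_coord]
    exact hx.cons hr'.1
  · rw [cons_apply_coord]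
    exact hy.cons hr'.2
  · rintro (_ | i) hi
    · exact left_mem_rect p q
    · exact rect_subset_rect_right hr (hrect i (by omega))

section
open Classical

variable {P : Finset Pt} {p q r : Pt}

lemma card_filter_rect_lt (hp : p ∈ P) (hr : r ∈ Rect p q) (hpr : p ≠ r) :
    #(P.filter (· ∈ Rect r q)) < #(P.filter (· ∈ Rect p q)) := by
  refine card_lt_card ((ssubset_iff_of_subset ?_).2 ⟨p, ?_, ?_⟩)
  · exact monotone_filter_right P fun z _ hz => rect_subset_rect_right hr hz
  · exact mem_filter.2 ⟨hp, left_mem_rect p q⟩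
  · intro h
    have hp' : p ∈ Rect q r := rect_comm r q ▸ (mem_filter.1 h).2
    exact hpr.symm (eq_of_mem_rect_of_mem_rect (rect_comm p q ▸ hr) hp')

lemma exists_rigAdj_mem_rect (hp : p ∈ P) (hq : q ∈ P) (hpq : p ≠ q) :
    ∃ r ∈ P, r ∈ Rect p q ∧ RIGAdj P p r := by
  set C := (P.filter (· ∈ Rect p q)).erase p
  have hqC : q ∈ C := mem_erase.2 ⟨hpq.symm, mem_filter.2 ⟨hq, right_mem_rect p q⟩⟩
  obtain ⟨r, hrC, hmin⟩ := C.exists_min_image (fun r => #(P.filter (· ∈ Rect p r))) ⟨q, hqC⟩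
  obtain ⟨hrp, hrP, hr⟩ : r ≠ p ∧ r ∈ P ∧ r ∈ Rect p q := by
    simpa only [C, mem_erase, mem_filter] using hrC
  refine ⟨r, hrP, hr, hp, hrP, hrp.symm, fun z hzP hz => or_iff_not_imp_left.2 fun hzp => ?_⟩
  have hsub : P.filter (· ∈ Rect p z) ⊆ P.filter (· ∈ Rect p r) :=
    monotone_filter_right P fun y _ hy => rect_subset_rect_left hz hy
  have hzC : z ∈ C := mem_erase.2 ⟨hzp, mem_filter.2 ⟨hzP, rect_subset_rect_left hr hz⟩⟩
  have hr_mem : r ∈ P.filter (· ∈ Rect p z) :=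
    (eq_of_subset_of_card_le hsub (hmin z hzC)).symm ▸ mem_filter.2 ⟨hrP, right_mem_rect p r⟩
  exact eq_of_mem_rect_of_mem_rect hz (mem_filter.1 hr_mem).2

end

theorem rig_connected_by_xyMonotone_path_in_rect_general (P : Finset Pt) (p q : Pt)
    (hp : p ∈ P) (hq : q ∈ P) :
    ∃ (w : ℕ → Pt) (t : ℕ), w 0 = p ∧ w t = q ∧
      (∀ i : ℕ, i < t → RIGAdj P (w i) (w (i + 1))) ∧
      XYMono w t ∧ (∀ i : ℕ, i ≤ t → w i ∈ Rect p q) := by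
  classical
  show ∃ w t, IsMonotoneRIGPath P p q w t
  induction hn : #(P.filter (· ∈ Rect p q)) using Nat.strong_induction_on generalizing p with
  | _ n ih =>
    rcases eq_or_ne p q with rfl | hpq
    · exact ⟨_, _, isMonotoneRIGPath_const P p⟩
    obtain ⟨r, hrP, hr, hpr⟩ := exists_rigAdj_mem_rect hp hq hpq
    have hpr_ne : p ≠ r := hpr.2.2.1
    obtain ⟨w, t, hw⟩ := ih _ (hn ▸ card_filter_rect_lt hp hr hpr_ne) r hrP rfl
    exact ⟨_, _, hw.cons hpr hr⟩

/-- in the rectangle of influence graph of `P`, every pair of distinct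
points is joined by an `xy`-monotone path staying in the rectangle with those corners. -/
theorem rig_connected_by_xyMonotone_path_in_rect (P : Finset Pt) (p q : Pt)
    (hp : p ∈ P) (hq : q ∈ P) (hpq : p ≠ q) :
    ∃ (w : ℕ → Pt) (t : ℕ), w 0 = p ∧ w t = q ∧
      (∀ i : ℕ, i < t → RIGAdj P (w i) (w (i + 1))) ∧
      XYMono w t ∧ (∀ i : ℕ, i ≤ t → w i ∈ Rect p q) :=
  rig_connected_by_xyMonotone_path_in_rect_general P p q hp hq

end
end

section
/- Let P be a finite point set with distinct y-coordinates, and let r_1 ∈ P have the minimal y-coordinate among a set of designated roots r_1, ..., r_k with y(r_1) < ... < y(r_k). Then the minimum-cost k-rooted y-monotone spanning graph of P is the edge-disjoint union of: (1) the minimum-cost rooted y-monotone spanning graph of P_{y ≤ y(r_1)} with root r_1; (2) the minimum-cost rooted y-monotone spanning graph of P_{y ≥ y(r_k)} with root r_k; and (3) for each 1 ≤ i ≤ k−1, the minimum-cost 2-rooted y-monotone spanning graph of P_{y(r_i) ≤ y ≤ y(r_{i+1})} with roots r_i, r_{i+1}. -/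
open scoped BigOperators

noncomputable section

def UpPath (E : Finset (Sym2 Pt)) (a b : Pt) : Prop :=
  ∃ w t, IsPathBetween E w t a b ∧ ∀ i j : ℕ, i ≤ j → j ≤ t → w i 1 ≤ w j 1

lemma upPath_refl (E : Finset (Sym2 Pt)) (a : Pt) : UpPath E a a :=
  ⟨fun _ => a, 0, ⟨rfl, rfl, fun i hi => absurd hi (Nat.not_lt_zero i)⟩, fun _ _ _ _ => le_rfl⟩

lemma upPath_mono {E F : Finset (Sym2 Pt)} {a b : Pt} (hEF : E ⊆ F) (h : UpPath E a b) :
    UpPath F a b := by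
  obtain ⟨w, t, ⟨h0, ht, he⟩, hm⟩ := h
  exact ⟨w, t, ⟨h0, ht, fun i hi => hEF (he i hi)⟩, hm⟩

lemma upPath_trans {E : Finset (Sym2 Pt)} {a b c : Pt} (h1 : UpPath E a b) (h2 : UpPath E b c) :
    UpPath E a c := by
  obtain ⟨w, t, ⟨hw0, hwt, hwe⟩, hwm⟩ := h1
  obtain ⟨v, s, ⟨hv0, hvs, hve⟩, hvm⟩ := h2
  refine ⟨fun i => if i < t then w i else v (i - t), t + s, ⟨?_, ?_, ?_⟩, ?_⟩
  · by_cases h : 0 < t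
    · simp only [if_pos h]; exact hw0
    · have ht0 : t = 0 := by omega
      subst ht0
      simp [hv0, ← hwt, hw0]
  · simp only [if_neg (by omega : ¬ t + s < t), Nat.add_sub_cancel_left]
    exact hvs
  · intro i hi
    by_cases h1i : i < t
    · by_cases h2i : i + 1 < t
      · simp only [if_pos h1i, if_pos h2i]; exact hwe i h1i
      · have hieq : i + 1 = t := by omega
        simp only [if_pos h1i, if_neg h2i]
        have hv : v (i + 1 - t) = w (i + 1) := by
          rw [hieq, Nat.sub_self, hv0, ← hwt]
        rw [hv]; exact hwe i h1i
    · have h2i : ¬ (i + 1 < t) := by omega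
      simp only [if_neg h1i, if_neg h2i]
      have heq : i + 1 - t = (i - t) + 1 := by omega
      rw [heq]; exact hve (i - t) (by omega)
  · intro i j hij hjt
    by_cases hi : i < t <;> by_cases hj : j < t
    · simp only [if_pos hi, if_pos hj]; exact hwm i j hij (by omega)
    · simp only [if_pos hi, if_neg hj]
      have e1 : w i 1 ≤ w t 1 := hwm i t (by omega) le_rfl
      have e2 : v 0 1 ≤ v (j - t) 1 := hvm 0 (j - t) (by omega) (by omega)
      rw [hv0, ← hwt] at e2
      linarith
    · omega
    · simp only [if_neg hi, if_neg hj]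
      exact hvm (i - t) (j - t) (by omega) (by omega)

lemma path_reverse {E : Finset (Sym2 Pt)} {w : ℕ → Pt} {t : ℕ} {a b : Pt}
    (hp : IsPathBetween E w t a b) : IsPathBetween E (fun i => w (t - i)) t b a := by
  refine ⟨by simpa using hp.2.1, by simpa using hp.1, ?_⟩
  intro i hi
  have h1 : t - i = (t - (i + 1)) + 1 := by omega
  have h2 := hp.2.2 (t - (i + 1)) (by omega)
  show s(w (t - i), w (t - (i + 1))) ∈ E
  rw [Sym2.eq_swap, h1]
  exact h2

lemma upPath_toYMono {E : Finset (Sym2 Pt)} {a b : Pt} (h : UpPath E a b) : ConnYMono E a b := by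
  obtain ⟨w, t, hp, hm⟩ := h
  exact ⟨w, t, hp, Or.inl hm⟩

lemma upPath_toYMonoRev {E : Finset (Sym2 Pt)} {a b : Pt} (h : UpPath E a b) :
    ConnYMono E b a := by
  obtain ⟨w, t, hp, hm⟩ := h
  refine ⟨fun i => w (t - i), t, path_reverse hp, Or.inr ?_⟩
  intro i j hij hjt
  exact hm (t - j) (t - i) (by omega) (by omega)

lemma connYMono_symm {E : Finset (Sym2 Pt)} {a b : Pt} (h : ConnYMono E a b) :
    ConnYMono E b a := by
  obtain ⟨w, t, hp, hm⟩ := h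
  have hm' : (∀ i j : ℕ, i ≤ j → j ≤ t → w i 1 ≤ w j 1) ∨
      (∀ i j : ℕ, i ≤ j → j ≤ t → w j 1 ≤ w i 1) := hm
  refine ⟨fun i => w (t - i), t, path_reverse hp, ?_⟩
  rcases hm' with h | h
  · exact Or.inr (fun i j hij hjt => h (t - j) (t - i) (by omega) (by omega))
  · exact Or.inl (fun i j hij hjt => h (t - j) (t - i) (by omega) (by omega))

lemma connYMono_up {E : Finset (Sym2 Pt)} {a b : Pt} (h : ConnYMono E a b) (hab : a 1 ≤ b 1) :
    UpPath E a b := by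
  obtain ⟨w, t, hp, hm⟩ := h
  have hm' : (∀ i j : ℕ, i ≤ j → j ≤ t → w i 1 ≤ w j 1) ∨
      (∀ i j : ℕ, i ≤ j → j ≤ t → w j 1 ≤ w i 1) := hm
  refine ⟨w, t, hp, ?_⟩
  rcases hm' with h | h
  · exact h
  · intro i j hij hjt
    have h1 : w i 1 ≤ w 0 1 := h 0 i (Nat.zero_le i) (by omega)
    have h2 : w t 1 ≤ w j 1 := h j t hjt le_rfl
    rw [hp.1] at h1
    rw [hp.2.1] at h2
    linarith

lemma pathBound {E : Finset (Sym2 Pt)} {w : ℕ → Pt} {t : ℕ} {a b : Pt}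
    (hp : IsPathBetween E w t a b) (hm : YMono w t) :
    ∀ j ≤ t, min (a 1) (b 1) ≤ w j 1 ∧ w j 1 ≤ max (a 1) (b 1) := by
  intro j hj
  have hm' : (∀ i j : ℕ, i ≤ j → j ≤ t → w i 1 ≤ w j 1) ∨
      (∀ i j : ℕ, i ≤ j → j ≤ t → w j 1 ≤ w i 1) := hm
  obtain ⟨h0, ht, -⟩ := hp
  rcases hm' with h | h
  · have e1 := h 0 j (Nat.zero_le j) hj
    have e2 := h j t hj le_rfl
    rw [h0] at e1; rw [ht] at e2
    constructor
    · exact le_trans (min_le_left _ _) e1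
    · exact le_trans e2 (le_max_right _ _)
  · have e1 := h 0 j (Nat.zero_le j) hj
    have e2 := h j t hj le_rfl
    rw [h0] at e1; rw [ht] at e2
    constructor
    · exact le_trans (min_le_right _ _) e2
    · exact le_trans e1 (le_max_left _ _)

lemma conn_restrict {E1 E2 : Finset (Sym2 Pt)} {a b : Pt}
    (h : ConnYMono E1 a b)
    (hsub : ∀ e ∈ E1, (∀ x ∈ e, min (a 1) (b 1) ≤ x 1 ∧ x 1 ≤ max (a 1) (b 1)) → e ∈ E2) :
    ConnYMono E2 a b := by
  obtain ⟨w, t, hp, hm⟩ := h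
  have hb := pathBound hp hm
  refine ⟨w, t, ⟨hp.1, hp.2.1, fun i hi => ?_⟩, hm⟩
  refine hsub _ (hp.2.2 i hi) ?_
  intro x hx
  rcases Sym2.mem_iff.mp hx with rfl | rfl
  · exact hb i (Nat.le_of_lt hi)
  · exact hb (i + 1) hi

lemma disj_graphs {V1 V2 : Finset Pt} {E1 E2 : Finset (Sym2 Pt)}
    (h1 : IsGraphOn V1 E1) (h2 : IsGraphOn V2 E2)
    (hV : ∀ p, p ∈ V1 → p ∈ V2 → ∀ q, q ∈ V1 → q ∈ V2 → p = q) : Disjoint E1 E2 := by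
  rw [Finset.disjoint_left]
  intro e
  induction e using Sym2.ind with
  | _ p q =>
    intro he1 he2
    obtain ⟨hp1, hq1, hne⟩ := h1 p q he1
    obtain ⟨hp2, hq2, -⟩ := h2 p q he2
    exact hne (hV p hp1 hp2 q hq1 hq2)

lemma edgeLen_nonneg (e : Sym2 Pt) :
    0 ≤ Sym2.lift ⟨fun p q => dist p q, fun p q => dist_comm p q⟩ e := by
  induction e using Sym2.ind with
  | _ p q => simpa using dist_nonneg

lemma cost_nonneg (E : Finset (Sym2 Pt)) : 0 ≤ cost E :=
  Finset.sum_nonneg fun e _ => edgeLen_nonneg e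

lemma cost_mono {A B : Finset (Sym2 Pt)} (h : A ⊆ B) : cost A ≤ cost B :=
  Finset.sum_le_sum_of_subset_of_nonneg h fun e _ _ => edgeLen_nonneg e

lemma cost_union {A B : Finset (Sym2 Pt)} (h : Disjoint A B) : cost (A ∪ B) = cost A + cost B :=
  Finset.sum_union h

lemma cost_biUnion {s : Finset ℕ} {f : ℕ → Finset (Sym2 Pt)}
    (h : Set.PairwiseDisjoint ↑s f) : cost (s.biUnion f) = ∑ i ∈ s, cost (f i) :=
  Finset.sum_biUnion h

/-- the minimum-cost `k`-rooted `y`-monotone spanning graph of `P` is the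
edge-disjoint union of the minimum-cost rooted pieces below `r 1`, above `r k`, and
between consecutive roots. -/
theorem kRooted_min_decomposition (P : Finset Pt)
    (hy : ∀ p ∈ P, ∀ q ∈ P, p ≠ q → p 1 ≠ q 1)
    (k : ℕ) (hk1 : 1 < k) (hkP : k < P.card)
    (r : ℕ → Pt) (hr : ∀ i : ℕ, 1 ≤ i → i ≤ k → r i ∈ P)
    (hinc : ∀ i : ℕ, 1 ≤ i → i < k → (r i) 1 < (r (i + 1)) 1)
    (Ebot Etop : Finset (Sym2 Pt)) (Emid : ℕ → Finset (Sym2 Pt))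
    (hbot : IsMinRooted (P.filter fun p => p 1 ≤ (r 1) 1) {r 1} Ebot)
    (htop : IsMinRooted (P.filter fun p => (r k) 1 ≤ p 1) {r k} Etop)
    (hmid : ∀ i : ℕ, 1 ≤ i → i < k →
      IsMinRooted (P.filter fun p => (r i) 1 ≤ p 1 ∧ p 1 ≤ (r (i + 1)) 1)
        {r i, r (i + 1)} (Emid i)) :
    Disjoint Ebot Etop ∧
    (∀ i ∈ Finset.Ico 1 k, Disjoint Ebot (Emid i) ∧ Disjoint Etop (Emid i)) ∧
    (∀ i ∈ Finset.Ico 1 k, ∀ j ∈ Finset.Ico 1 k, i ≠ j → Disjoint (Emid i) (Emid j)) ∧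
    IsMinRooted P ((Finset.Ico 1 (k + 1)).image r)
      (Ebot ∪ Etop ∪ (Finset.Ico 1 k).biUnion Emid) := by
  classical
  have hk0 : 1 ≤ k := le_of_lt hk1
  have hstrict : ∀ i : ℕ, 1 ≤ i → ∀ j : ℕ, i < j → j ≤ k → r i 1 < r j 1 := by
    intro i h1 j
    induction j with
    | zero => intro h _; exact absurd h (Nat.not_lt_zero i)
    | succ j ih =>
      intro hij hjk
      rcases Nat.lt_succ_iff_lt_or_eq.mp hij with h | h
      · exact lt_trans (ih h (by omega)) (hinc j (by omega) (by omega))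
      · subst h; exact hinc i h1 (by omega)
  have hmono : ∀ i j : ℕ, 1 ≤ i → i ≤ j → j ≤ k → r i 1 ≤ r j 1 := by
    intro i j h1 hij hjk
    rcases eq_or_lt_of_le hij with h | h
    · rw [h]
    · exact (hstrict i h1 j h hjk).le
  have hr1k : r 1 1 < r k 1 := hstrict 1 le_rfl k hk1 le_rfl
  have hGb := hbot.1.1
  have hGt := htop.1.1
  have hGm : ∀ i, 1 ≤ i → i < k →
      IsGraphOn (P.filter fun p => (r i) 1 ≤ p 1 ∧ p 1 ≤ (r (i + 1)) 1) (Emid i) :=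
    fun i h1 h2 => (hmid i h1 h2).1.1
  -- subsingleton intersections
  have keyBT : ∀ p, p ∈ (P.filter fun p => p 1 ≤ (r 1) 1) →
      p ∈ (P.filter fun p => (r k) 1 ≤ p 1) →
      ∀ q, q ∈ (P.filter fun p => p 1 ≤ (r 1) 1) →
      q ∈ (P.filter fun p => (r k) 1 ≤ p 1) → p = q := by
    intro p hp1 hp2 q _ _
    rw [Finset.mem_filter] at hp1 hp2
    exfalso; linarith [hp1.2, hp2.2, hr1k]
  have keyBM : ∀ i, 1 ≤ i → i < k → ∀ p, p ∈ (P.filter fun p => p 1 ≤ (r 1) 1) →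
      p ∈ (P.filter fun p => (r i) 1 ≤ p 1 ∧ p 1 ≤ (r (i + 1)) 1) →
      ∀ q, q ∈ (P.filter fun p => p 1 ≤ (r 1) 1) →
      q ∈ (P.filter fun p => (r i) 1 ≤ p 1 ∧ p 1 ≤ (r (i + 1)) 1) → p = q := by
    intro i h1 h2 p hp1 hp2 q hq1 hq2
    rw [Finset.mem_filter] at hp1 hp2 hq1 hq2
    have h1i : r 1 1 ≤ r i 1 := hmono 1 i le_rfl h1 (le_of_lt h2)
    by_contra hne
    exact hy p hp1.1 q hq1.1 hne
      (by linarith [hp1.2, hp2.2.1, hq1.2, hq2.2.1])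
  have keyTM : ∀ i, 1 ≤ i → i < k → ∀ p, p ∈ (P.filter fun p => (r k) 1 ≤ p 1) →
      p ∈ (P.filter fun p => (r i) 1 ≤ p 1 ∧ p 1 ≤ (r (i + 1)) 1) →
      ∀ q, q ∈ (P.filter fun p => (r k) 1 ≤ p 1) →
      q ∈ (P.filter fun p => (r i) 1 ≤ p 1 ∧ p 1 ≤ (r (i + 1)) 1) → p = q := by
    intro i h1 h2 p hp1 hp2 q hq1 hq2
    rw [Finset.mem_filter] at hp1 hp2 hq1 hq2
    have h1i : r (i + 1) 1 ≤ r k 1 := hmono (i + 1) k (by omega) h2 le_rfl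
    by_contra hne
    exact hy p hp1.1 q hq1.1 hne
      (by linarith [hp1.2, hp2.2.2, hq1.2, hq2.2.2])
  have keyMM : ∀ i j, 1 ≤ i → i < k → 1 ≤ j → j < k → i < j →
      ∀ p, p ∈ (P.filter fun p => (r i) 1 ≤ p 1 ∧ p 1 ≤ (r (i + 1)) 1) →
      p ∈ (P.filter fun p => (r j) 1 ≤ p 1 ∧ p 1 ≤ (r (j + 1)) 1) →
      ∀ q, q ∈ (P.filter fun p => (r i) 1 ≤ p 1 ∧ p 1 ≤ (r (i + 1)) 1) →
      q ∈ (P.filter fun p => (r j) 1 ≤ p 1 ∧ p 1 ≤ (r (j + 1)) 1) → p = q := by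
    intro i j hi1 hik hj1 hjk hij p hp1 hp2 q hq1 hq2
    rw [Finset.mem_filter] at hp1 hp2 hq1 hq2
    have h1i : r (i + 1) 1 ≤ r j 1 := hmono (i + 1) j (by omega) (by omega) (by omega)
    by_contra hne
    exact hy p hp1.1 q hq1.1 hne
      (by linarith [hp1.2.2, hp2.2.1, hq1.2.2, hq2.2.1])
  have dBT : Disjoint Ebot Etop := disj_graphs hGb hGt keyBT
  have dBM : ∀ i, 1 ≤ i → i < k → Disjoint Ebot (Emid i) :=
    fun i h1 h2 => disj_graphs hGb (hGm i h1 h2) (keyBM i h1 h2)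
  have dTM : ∀ i, 1 ≤ i → i < k → Disjoint Etop (Emid i) :=
    fun i h1 h2 => disj_graphs hGt (hGm i h1 h2) (keyTM i h1 h2)
  have dMM : ∀ i, 1 ≤ i → i < k → ∀ j, 1 ≤ j → j < k → i ≠ j →
      Disjoint (Emid i) (Emid j) := by
    intro i hi1 hik j hj1 hjk hne
    rcases lt_or_gt_of_ne hne with h | h
    · exact disj_graphs (hGm i hi1 hik) (hGm j hj1 hjk) (keyMM i j hi1 hik hj1 hjk h)
    · exact (disj_graphs (hGm j hj1 hjk) (hGm i hi1 hik) (keyMM j i hj1 hjk hi1 hik h)).symm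
  set EU := Ebot ∪ Etop ∪ (Finset.Ico 1 k).biUnion Emid with hEU
  have sB : Ebot ⊆ EU := by
    rw [hEU]; exact Finset.subset_union_left.trans Finset.subset_union_left
  have sT : Etop ⊆ EU := by
    rw [hEU]; exact Finset.subset_union_right.trans Finset.subset_union_left
  have sM : ∀ i, 1 ≤ i → i < k → Emid i ⊆ EU := by
    intro i h1 h2
    rw [hEU]
    exact (Finset.subset_biUnion_of_mem Emid (Finset.mem_Ico.mpr ⟨h1, h2⟩)).trans
      Finset.subset_union_right
  have hRmem : ∀ i, 1 ≤ i → i ≤ k → r i ∈ (Finset.Ico 1 (k + 1)).image r := fun i h1 h2 =>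
    Finset.mem_image.mpr ⟨i, Finset.mem_Ico.mpr ⟨h1, by omega⟩, rfl⟩
  -- up-paths
  have upB : ∀ p ∈ (P.filter fun p => p 1 ≤ (r 1) 1), UpPath Ebot p (r 1) := by
    intro p hp
    exact connYMono_up (connYMono_symm (hbot.1.2 (r 1) (Finset.mem_singleton_self _) p hp))
      (Finset.mem_filter.mp hp).2
  have upT : ∀ p ∈ (P.filter fun p => (r k) 1 ≤ p 1), UpPath Etop (r k) p := by
    intro p hp
    exact connYMono_up (htop.1.2 (r k) (Finset.mem_singleton_self _) p hp)
      (Finset.mem_filter.mp hp).2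
  have upML : ∀ i, 1 ≤ i → i < k →
      ∀ p ∈ (P.filter fun p => (r i) 1 ≤ p 1 ∧ p 1 ≤ (r (i + 1)) 1),
      UpPath (Emid i) (r i) p := by
    intro i h1 h2 p hp
    exact connYMono_up ((hmid i h1 h2).1.2 (r i) (by simp) p hp)
      (Finset.mem_filter.mp hp).2.1
  have upMR : ∀ i, 1 ≤ i → i < k →
      ∀ p ∈ (P.filter fun p => (r i) 1 ≤ p 1 ∧ p 1 ≤ (r (i + 1)) 1),
      UpPath (Emid i) p (r (i + 1)) := by
    intro i h1 h2 p hp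
    exact connYMono_up (connYMono_symm ((hmid i h1 h2).1.2 (r (i + 1)) (by simp) p hp))
      (Finset.mem_filter.mp hp).2.2
  have chain : ∀ i, 1 ≤ i → ∀ j, i ≤ j → j ≤ k → UpPath EU (r i) (r j) := by
    intro i h1 j
    induction j with
    | zero => intro h _; exfalso; omega
    | succ j ih =>
      intro hij hjk
      rcases eq_or_lt_of_le hij with h | h
      · rw [h]; exact upPath_refl _ _
      · have hstep : UpPath EU (r j) (r (j + 1)) := by
          have hmem : r (j + 1) ∈ (P.filter fun p => (r j) 1 ≤ p 1 ∧ p 1 ≤ (r (j + 1)) 1) :=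
            Finset.mem_filter.mpr ⟨hr (j + 1) (by omega) hjk,
              (hinc j (by omega) (by omega)).le, le_rfl⟩
          exact upPath_mono (sM j (by omega) (by omega)) (upML j (by omega) (by omega) _ hmem)
        exact upPath_trans (ih (by omega) (by omega)) hstep
  have hspan : RootedSpan P ((Finset.Ico 1 (k + 1)).image r) EU := by
    constructor
    · intro p q he
      rw [hEU] at he
      rcases Finset.mem_union.mp he with he | he
      · rcases Finset.mem_union.mp he with he | he
        · obtain ⟨h1, h2, h3⟩ := hGb p q he
          exact ⟨(Finset.mem_filter.mp h1).1, (Finset.mem_filter.mp h2).1, h3⟩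
        · obtain ⟨h1, h2, h3⟩ := hGt p q he
          exact ⟨(Finset.mem_filter.mp h1).1, (Finset.mem_filter.mp h2).1, h3⟩
      · obtain ⟨i, hi, he⟩ := Finset.mem_biUnion.mp he
        rw [Finset.mem_Ico] at hi
        obtain ⟨h1, h2, h3⟩ := hGm i hi.1 hi.2 p q he
        exact ⟨(Finset.mem_filter.mp h1).1, (Finset.mem_filter.mp h2).1, h3⟩
    · intro ρ hρ p hp
      obtain ⟨j, hj, rfl⟩ := Finset.mem_image.mp hρ
      rw [Finset.mem_Ico] at hj
      have hj1 : 1 ≤ j := hj.1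
      have hjk : j ≤ k := by omega
      rcases le_or_gt (p 1) (r 1 1) with hb | hb
      · have hpV : p ∈ (P.filter fun p => p 1 ≤ (r 1) 1) := Finset.mem_filter.mpr ⟨hp, hb⟩
        exact upPath_toYMonoRev
          (upPath_trans (upPath_mono sB (upB p hpV)) (chain 1 le_rfl j hj1 hjk))
      rcases le_or_gt (r k 1) (p 1) with htp | htp
      · have hpV : p ∈ (P.filter fun p => (r k) 1 ≤ p 1) := Finset.mem_filter.mpr ⟨hp, htp⟩
        exact upPath_toYMono
          (upPath_trans (chain j hj1 k hjk le_rfl) (upPath_mono sT (upT p hpV)))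
      · obtain ⟨i, hi1, hik, hlo, hhi⟩ :
            ∃ i, 1 ≤ i ∧ i < k ∧ r i 1 ≤ p 1 ∧ p 1 ≤ r (i + 1) 1 := by
          set S := (Finset.Ico 1 k).filter (fun i => r i 1 ≤ p 1) with hS
          have hSne : S.Nonempty :=
            ⟨1, Finset.mem_filter.mpr ⟨Finset.mem_Ico.mpr ⟨le_rfl, hk1⟩, hb.le⟩⟩
          obtain ⟨hmem1, hmem2⟩ := Finset.mem_filter.mp (S.max'_mem hSne)
          rw [Finset.mem_Ico] at hmem1
          refine ⟨S.max' hSne, hmem1.1, hmem1.2, hmem2, ?_⟩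
          by_cases hc : S.max' hSne + 1 = k
          · rw [hc]; exact htp.le
          · by_contra hcon
            push_neg at hcon
            have hmm : S.max' hSne + 1 ∈ S :=
              Finset.mem_filter.mpr ⟨Finset.mem_Ico.mpr ⟨by omega, by omega⟩, hcon.le⟩
            have := S.le_max' _ hmm
            omega
        have hpV : p ∈ (P.filter fun p => (r i) 1 ≤ p 1 ∧ p 1 ≤ (r (i + 1)) 1) :=
          Finset.mem_filter.mpr ⟨hp, hlo, hhi⟩
        rcases le_or_gt j i with hji | hji
        · exact upPath_toYMono (upPath_trans (chain j hj1 i hji (by omega))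
            (upPath_mono (sM i hi1 hik) (upML i hi1 hik p hpV)))
        · exact upPath_toYMonoRev (upPath_trans
            (upPath_mono (sM i hi1 hik) (upMR i hi1 hik p hpV))
            (chain (i + 1) (by omega) j hji hjk))
  have hmin : ∀ E', RootedSpan P ((Finset.Ico 1 (k + 1)).image r) E' → cost EU ≤ cost E' := by
    intro E' hE'
    set B' := E'.filter (fun e => ∀ x ∈ e, x 1 ≤ r 1 1) with hB'
    set T' := E'.filter (fun e => ∀ x ∈ e, r k 1 ≤ x 1) with hT'
    set M' := fun i => E'.filter (fun e => ∀ x ∈ e, r i 1 ≤ x 1 ∧ x 1 ≤ r (i + 1) 1) with hM'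
    have hGb' : IsGraphOn (P.filter fun p => p 1 ≤ (r 1) 1) B' := by
      intro p q he
      rw [hB', Finset.mem_filter] at he
      obtain ⟨hpP, hqP, hne⟩ := hE'.1 p q he.1
      exact ⟨Finset.mem_filter.mpr ⟨hpP, he.2 p (Sym2.mem_mk_left p q)⟩,
             Finset.mem_filter.mpr ⟨hqP, he.2 q (Sym2.mem_mk_right p q)⟩, hne⟩
    have hGt' : IsGraphOn (P.filter fun p => (r k) 1 ≤ p 1) T' := by
      intro p q he
      rw [hT', Finset.mem_filter] at he
      obtain ⟨hpP, hqP, hne⟩ := hE'.1 p q he.1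
      exact ⟨Finset.mem_filter.mpr ⟨hpP, he.2 p (Sym2.mem_mk_left p q)⟩,
             Finset.mem_filter.mpr ⟨hqP, he.2 q (Sym2.mem_mk_right p q)⟩, hne⟩
    have hGm' : ∀ i, 1 ≤ i → i < k →
        IsGraphOn (P.filter fun p => (r i) 1 ≤ p 1 ∧ p 1 ≤ (r (i + 1)) 1) (M' i) := by
      intro i h1 h2 p q he
      rw [hM', Finset.mem_filter] at he
      obtain ⟨hpP, hqP, hne⟩ := hE'.1 p q he.1
      exact ⟨Finset.mem_filter.mpr ⟨hpP, he.2 p (Sym2.mem_mk_left p q)⟩,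
             Finset.mem_filter.mpr ⟨hqP, he.2 q (Sym2.mem_mk_right p q)⟩, hne⟩
    have spB : RootedSpan (P.filter fun p => p 1 ≤ (r 1) 1) {r 1} B' := by
      refine ⟨hGb', ?_⟩
      intro ρ hρ p hp
      rw [Finset.mem_singleton] at hρ
      subst hρ
      have hple := (Finset.mem_filter.mp hp).2
      have hconn := hE'.2 (r 1) (hRmem 1 le_rfl hk0) p (Finset.mem_filter.mp hp).1
      refine conn_restrict hconn ?_
      intro e he hbd
      rw [hB', Finset.mem_filter]
      exact ⟨he, fun x hx => le_trans (hbd x hx).2 (max_le le_rfl hple)⟩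
    have spT : RootedSpan (P.filter fun p => (r k) 1 ≤ p 1) {r k} T' := by
      refine ⟨hGt', ?_⟩
      intro ρ hρ p hp
      rw [Finset.mem_singleton] at hρ
      subst hρ
      have hple := (Finset.mem_filter.mp hp).2
      have hconn := hE'.2 (r k) (hRmem k hk0 le_rfl) p (Finset.mem_filter.mp hp).1
      refine conn_restrict hconn ?_
      intro e he hbd
      rw [hT', Finset.mem_filter]
      exact ⟨he, fun x hx => le_trans (le_min le_rfl hple) (hbd x hx).1⟩
    have spM : ∀ i, 1 ≤ i → i < k →
        RootedSpan (P.filter fun p => (r i) 1 ≤ p 1 ∧ p 1 ≤ (r (i + 1)) 1)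
          {r i, r (i + 1)} (M' i) := by
      intro i h1 h2
      refine ⟨hGm' i h1 h2, ?_⟩
      intro ρ hρ p hp
      have hpP := (Finset.mem_filter.mp hp).1
      have hplo := (Finset.mem_filter.mp hp).2.1
      have hphi := (Finset.mem_filter.mp hp).2.2
      have hρbd : r i 1 ≤ ρ 1 ∧ ρ 1 ≤ r (i + 1) 1 := by
        rcases Finset.mem_insert.mp hρ with h | h
        · rw [h]; exact ⟨le_rfl, (hinc i h1 h2).le⟩
        · rw [Finset.mem_singleton] at h; rw [h]; exact ⟨(hinc i h1 h2).le, le_rfl⟩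
      have hρR : ρ ∈ (Finset.Ico 1 (k + 1)).image r := by
        rcases Finset.mem_insert.mp hρ with h | h
        · rw [h]; exact hRmem i h1 (by omega)
        · rw [Finset.mem_singleton] at h; rw [h]; exact hRmem (i + 1) (by omega) (by omega)
      have hconn := hE'.2 ρ hρR p hpP
      refine conn_restrict hconn ?_
      intro e he hbd
      rw [hM', Finset.mem_filter]
      refine ⟨he, fun x hx => ?_⟩
      exact ⟨le_trans (le_min hρbd.1 hplo) (hbd x hx).1,
             le_trans (hbd x hx).2 (max_le hρbd.2 hphi)⟩
    have dBT' : Disjoint B' T' := disj_graphs hGb' hGt' keyBT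
    have dBM' : ∀ i, 1 ≤ i → i < k → Disjoint B' (M' i) :=
      fun i h1 h2 => disj_graphs hGb' (hGm' i h1 h2) (keyBM i h1 h2)
    have dTM' : ∀ i, 1 ≤ i → i < k → Disjoint T' (M' i) :=
      fun i h1 h2 => disj_graphs hGt' (hGm' i h1 h2) (keyTM i h1 h2)
    have dMM' : ∀ i, 1 ≤ i → i < k → ∀ j, 1 ≤ j → j < k → i ≠ j →
        Disjoint (M' i) (M' j) := by
      intro i hi1 hik j hj1 hjk hne
      rcases lt_or_gt_of_ne hne with h | h
      · exact disj_graphs (hGm' i hi1 hik) (hGm' j hj1 hjk) (keyMM i j hi1 hik hj1 hjk h)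
      · exact (disj_graphs (hGm' j hj1 hjk) (hGm' i hi1 hik) (keyMM j i hj1 hjk hi1 hik h)).symm
    have hsub : B' ∪ T' ∪ (Finset.Ico 1 k).biUnion M' ⊆ E' := by
      refine Finset.union_subset (Finset.union_subset ?_ ?_) ?_
      · rw [hB']; exact Finset.filter_subset _ _
      · rw [hT']; exact Finset.filter_subset _ _
      · refine Finset.biUnion_subset.mpr fun i _ => ?_
        rw [hM']; exact Finset.filter_subset _ _
    have pd : Set.PairwiseDisjoint ↑(Finset.Ico 1 k) Emid := by
      intro i hi j hj hne
      simp only [Finset.coe_Ico, Set.mem_Ico] at hi hj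
      exact dMM i hi.1 hi.2 j hj.1 hj.2 hne
    have pd' : Set.PairwiseDisjoint ↑(Finset.Ico 1 k) M' := by
      intro i hi j hj hne
      simp only [Finset.coe_Ico, Set.mem_Ico] at hi hj
      exact dMM' i hi.1 hi.2 j hj.1 hj.2 hne
    have hd1 : Disjoint (Ebot ∪ Etop) ((Finset.Ico 1 k).biUnion Emid) := by
      rw [Finset.disjoint_union_left]
      constructor <;> rw [Finset.disjoint_biUnion_right] <;> intro i hi <;>
        rw [Finset.mem_Ico] at hi
      · exact dBM i hi.1 hi.2
      · exact dTM i hi.1 hi.2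
    have hd1' : Disjoint (B' ∪ T') ((Finset.Ico 1 k).biUnion M') := by
      rw [Finset.disjoint_union_left]
      constructor <;> rw [Finset.disjoint_biUnion_right] <;> intro i hi <;>
        rw [Finset.mem_Ico] at hi
      · exact dBM' i hi.1 hi.2
      · exact dTM' i hi.1 hi.2
    have costEU : cost EU = cost Ebot + cost Etop + ∑ i ∈ Finset.Ico 1 k, cost (Emid i) := by
      rw [hEU, cost_union hd1, cost_union dBT, cost_biUnion pd]
    have costP : cost (B' ∪ T' ∪ (Finset.Ico 1 k).biUnion M') =
        cost B' + cost T' + ∑ i ∈ Finset.Ico 1 k, cost (M' i) := by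
      rw [cost_union hd1', cost_union dBT', cost_biUnion pd']
    calc cost EU = cost Ebot + cost Etop + ∑ i ∈ Finset.Ico 1 k, cost (Emid i) := costEU
      _ ≤ cost B' + cost T' + ∑ i ∈ Finset.Ico 1 k, cost (M' i) := by
          refine add_le_add (add_le_add (hbot.2 B' spB) (htop.2 T' spT)) ?_
          refine Finset.sum_le_sum fun i hi => ?_
          rw [Finset.mem_Ico] at hi
          exact (hmid i hi.1 hi.2).2 (M' i) (spM i hi.1 hi.2)
      _ = cost (B' ∪ T' ∪ (Finset.Ico 1 k).biUnion M') := costP.symm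
      _ ≤ cost E' := cost_mono hsub
  refine ⟨dBT, ?_, ?_, hspan, hmin⟩
  · intro i hi
    rw [Finset.mem_Ico] at hi
    exact ⟨dBM i hi.1 hi.2, dTM i hi.1 hi.2⟩
  · intro i hi j hj hne
    rw [Finset.mem_Ico] at hi hj
    exact dMM i hi.1 hi.2 j hj.1 hj.2 hne

end
end

section
/- Let P be a finite point set with designated roots r_1, r_2 such that r_1 is the lowest and r_2 the highest point of P. Let G_1 be a minimum-cost rooted y-monotone spanning graph of P with single root r_1, and G_2 a minimum-cost rooted y-monotone spanning graph of P with single root r_2. Then G_1 ∪ G_2 is a 2-rooted y-monotone spanning graph of P whose cost is at most twice the cost of the minimum-cost 2-rooted y-monotone spanning graph of P with roots r_1, r_2. -/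
open scoped BigOperators

noncomputable section

lemma connYMono_mono {E E' : Finset (Sym2 Pt)} (h : E ⊆ E') {a b : Pt}
    (hc : ConnYMono E a b) : ConnYMono E' a b := by
  obtain ⟨w, t, ⟨h0, ht, hs⟩, hm⟩ := hc
  exact ⟨w, t, ⟨h0, ht, fun i hi => h (hs i hi)⟩, hm⟩

lemma cost_union_le (A B : Finset (Sym2 Pt)) : cost (A ∪ B) ≤ cost A + cost B := by
  have h := Finset.sum_union_inter (s₁ := A) (s₂ := B)
    (f := fun e => Sym2.lift ⟨fun p q => dist p q, fun p q => dist_comm p q⟩ e)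
  have hnn := cost_nonneg (A ∩ B)
  unfold cost at *
  linarith

/-- the union of minimum-cost rooted `y`-monotone spanning graphs for the
lowest and highest roots is a `2`-rooted `y`-monotone spanning graph of cost at most
twice the optimum. -/
theorem two_approx_two_rooted (P : Finset Pt) (r1 r2 : Pt)
    (h1 : r1 ∈ P) (h2 : r2 ∈ P)
    (hlow : ∀ p ∈ P, p ≠ r1 → (r1) 1 < p 1)
    (hhigh : ∀ p ∈ P, p ≠ r2 → p 1 < (r2) 1)
    (G1 G2 Eopt : Finset (Sym2 Pt))
    (hG1 : IsMinRooted P {r1} G1) (hG2 : IsMinRooted P {r2} G2)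
    (hopt : IsMinRooted P {r1, r2} Eopt) :
    RootedSpan P {r1, r2} (G1 ∪ G2) ∧ cost (G1 ∪ G2) ≤ 2 * cost Eopt := by
  obtain ⟨⟨hg1, hc1⟩, hmin1⟩ := hG1
  obtain ⟨⟨hg2, hc2⟩, hmin2⟩ := hG2
  obtain ⟨⟨hgo, hco⟩, _⟩ := hopt
  constructor
  · constructor
    · intro p q hpq
      rcases Finset.mem_union.1 hpq with h | h
      · exact hg1 p q h
      · exact hg2 p q h
    · intro r hr p hp
      rcases Finset.mem_insert.1 hr with rfl | hr
      · exact connYMono_mono Finset.subset_union_left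
          (hc1 r (Finset.mem_singleton_self r) p hp)
      · rw [Finset.mem_singleton] at hr; subst hr
        exact connYMono_mono Finset.subset_union_right
          (hc2 r (Finset.mem_singleton_self r) p hp)
  · have ho1 : RootedSpan P {r1} Eopt := by
      refine ⟨hgo, fun r hr p hp => ?_⟩
      rw [Finset.mem_singleton] at hr; subst hr
      exact hco r (Finset.mem_insert_self _ _) p hp
    have ho2 : RootedSpan P {r2} Eopt := by
      refine ⟨hgo, fun r hr p hp => ?_⟩
      rw [Finset.mem_singleton] at hr; subst hr
      exact hco r (by simp) p hp
    have := hmin1 Eopt ho1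
    have := hmin2 Eopt ho2
    have := cost_union_le G1 G2
    linarith

end
end

section
/- Let G = (P, E) be a geometric graph in which all vertices have distinct y-coordinates, with a single designated root r that is neither the highest nor the lowest point of P. Then G is rooted y-monotone (r is connected to every other vertex by a y-monotone path) if and only if every vertex p ≠ r has a neighbor q such that y(q) lies between y(r) (inclusive) and y(p) (exclusive), i.e., either y(r) ≤ y(q) < y(p) or y(p) < y(q) ≤ y(r). -/
open scoped BigOperators

noncomputable section

lemma monoTo_of_le {f : ℕ → ℝ} {t : ℕ} (h : MonoTo f t) (h0 : f 0 ≤ f t) :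
    ∀ i j : ℕ, i ≤ j → j ≤ t → f i ≤ f j := by
  rcases h with h | h
  · exact h
  · intro i j hij hjt
    calc f i ≤ f 0 := h 0 i (Nat.zero_le _) (le_trans hij hjt)
    _ ≤ f t := h0
    _ ≤ f j := h j t hjt le_rfl

lemma monoTo_of_ge {f : ℕ → ℝ} {t : ℕ} (h : MonoTo f t) (h0 : f t ≤ f 0) :
    ∀ i j : ℕ, i ≤ j → j ≤ t → f j ≤ f i := by
  rcases h with h | h
  · intro i j hij hjt
    calc f j ≤ f t := h j t hjt le_rfl
    _ ≤ f 0 := h0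
    _ ≤ f i := h 0 i (Nat.zero_le _) (le_trans hij hjt)
  · exact h

lemma connYMono_self (E : Finset (Sym2 Pt)) (r : Pt) : ConnYMono E r r :=
  ⟨fun _ => r, 0, ⟨rfl, rfl, fun i hi => absurd hi (Nat.not_lt_zero i)⟩,
   Or.inl (fun _ _ _ _ => le_rfl)⟩

lemma extend_up {E : Finset (Sym2 Pt)} {r q p : Pt} (h : ConnYMono E r q)
    (hrq : r 1 ≤ q 1) (hqp : q 1 ≤ p 1) (he : s(q, p) ∈ E) : ConnYMono E r p := by
  obtain ⟨w, t, ⟨h0, ht, hedge⟩, hm⟩ := h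
  have inc : ∀ i j : ℕ, i ≤ j → j ≤ t → w i 1 ≤ w j 1 :=
    monoTo_of_le hm (show w 0 1 ≤ w t 1 by rw [h0, ht]; exact hrq)
  have hwt : w t 1 ≤ p 1 := by rw [ht]; exact hqp
  refine ⟨fun i => if i ≤ t then w i else p, t + 1, ⟨?_, ?_, ?_⟩, Or.inl ?_⟩
  · simp [Nat.zero_le t, h0]
  · simp
  · intro i hi
    rcases lt_or_eq_of_le (Nat.lt_succ_iff.mp hi) with hlt | heq
    · simp only [if_pos (le_of_lt hlt), if_pos (Nat.succ_le_of_lt hlt)]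
      exact hedge i hlt
    · subst heq
      simp only [le_refl, if_pos, Nat.not_succ_le_self, if_neg, ht]
      exact he
  · intro i j hij hjt
    by_cases hj : j ≤ t
    · have hi : i ≤ t := le_trans hij hj
      simp only [if_pos hi, if_pos hj]
      exact inc i j hij hj
    · by_cases hi : i ≤ t
      · simp only [if_pos hi, if_neg hj]
        exact le_trans (inc i t hi le_rfl) hwt
      · simp only [if_neg hi, if_neg hj, le_refl]

lemma extend_down {E : Finset (Sym2 Pt)} {r q p : Pt} (h : ConnYMono E r q)
    (hrq : q 1 ≤ r 1) (hqp : p 1 ≤ q 1) (he : s(q, p) ∈ E) : ConnYMono E r p := by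
  obtain ⟨w, t, ⟨h0, ht, hedge⟩, hm⟩ := h
  have dec : ∀ i j : ℕ, i ≤ j → j ≤ t → w j 1 ≤ w i 1 :=
    monoTo_of_ge hm (show w t 1 ≤ w 0 1 by rw [h0, ht]; exact hrq)
  have hwt : p 1 ≤ w t 1 := by rw [ht]; exact hqp
  refine ⟨fun i => if i ≤ t then w i else p, t + 1, ⟨?_, ?_, ?_⟩, Or.inr ?_⟩
  · simp [Nat.zero_le t, h0]
  · simp
  · intro i hi
    rcases lt_or_eq_of_le (Nat.lt_succ_iff.mp hi) with hlt | heq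
    · simp only [if_pos (le_of_lt hlt), if_pos (Nat.succ_le_of_lt hlt)]
      exact hedge i hlt
    · subst heq
      simp only [le_refl, if_pos, Nat.not_succ_le_self, if_neg, ht]
      exact he
  · intro i j hij hjt
    by_cases hj : j ≤ t
    · have hi : i ≤ t := le_trans hij hj
      simp only [if_pos hi, if_pos hj]
      exact dec i j hij hj
    · by_cases hi : i ≤ t
      · simp only [if_pos hi, if_neg hj]
        exact le_trans hwt (dec i t hi le_rfl)
      · simp only [if_neg hi, if_neg hj, le_refl]

/-- characterization of rooted `y`-monotone graphs whose root is neither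
the highest nor the lowest point. -/
theorem rooted_yMonotone_characterization (P : Finset Pt) (E : Finset (Sym2 Pt))
    (hE : IsGraphOn P E)
    (hy : ∀ p ∈ P, ∀ q ∈ P, p ≠ q → p 1 ≠ q 1)
    (r : Pt) (hr : r ∈ P)
    (hnotmax : ∃ p ∈ P, r 1 < p 1) (hnotmin : ∃ p ∈ P, p 1 < r 1) :
    (∀ p ∈ P, ConnYMono E r p) ↔
      ∀ p ∈ P, p ≠ r → ∃ q : Pt, s(p, q) ∈ E ∧
        ((r 1 ≤ q 1 ∧ q 1 < p 1) ∨ (p 1 < q 1 ∧ q 1 ≤ r 1)) := by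
  constructor
  · intro h p hp hpr
    obtain ⟨w, t, ⟨h0, ht, hedge⟩, hm⟩ := h p hp
    have ht0 : t ≠ 0 := by
      rintro rfl
      rw [h0] at ht
      exact hpr ht.symm
    obtain ⟨s, rfl⟩ := Nat.exists_eq_succ_of_ne_zero ht0
    have he : s(w s, w (s + 1)) ∈ E := hedge s (Nat.lt_succ_self s)
    rw [show w (s + 1) = p from ht] at he
    obtain ⟨hq1, _, hq3⟩ := hE _ _ he
    refine ⟨w s, by rw [Sym2.eq_swap]; exact he, ?_⟩
    have hne : w s 1 ≠ p 1 := hy _ hq1 _ hp hq3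
    rcases hm with hinc | hdec
    · left
      constructor
      · have := hinc 0 s (Nat.zero_le s) (Nat.le_succ s)
        simp only [h0] at this
        exact this
      · have := hinc s (s + 1) (Nat.le_succ s) le_rfl
        simp only [ht] at this
        exact lt_of_le_of_ne this hne
    · right
      constructor
      · have := hdec s (s + 1) (Nat.le_succ s) le_rfl
        simp only [ht] at this
        exact lt_of_le_of_ne this (Ne.symm hne)
      · have := hdec 0 s (Nat.zero_le s) (Nat.le_succ s)
        simp only [h0] at this
        exact this
  · intro H p hp
    classical
    set m : Pt → ℕ := fun a => (P.filter fun z => |z 1 - r 1| < |a 1 - r 1|).card with hmdef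
    suffices key : ∀ n : ℕ, ∀ p ∈ P, m p = n → ConnYMono E r p from key (m p) p hp rfl
    intro n
    induction n using Nat.strong_induction_on with
    | _ n IH =>
      intro p hp hmp
      by_cases hpr : p = r
      · subst hpr; exact connYMono_self E p
      · obtain ⟨q, hqe, hqy⟩ := H p hp hpr
        obtain ⟨_, hqP, hpq⟩ := hE _ _ hqe
        have hqe' : s(q, p) ∈ E := by rw [Sym2.eq_swap]; exact hqe
        have habs : |q 1 - r 1| < |p 1 - r 1| := by
          rcases hqy with ⟨h1, h2⟩ | ⟨h1, h2⟩
          · rw [abs_of_nonneg (by linarith), abs_of_nonneg (by linarith)]; linarith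
          · rw [abs_of_nonpos (by linarith), abs_of_nonpos (by linarith)]; linarith
        have hconnq : ConnYMono E r q := by
          by_cases hqr : q = r
          · subst hqr; exact connYMono_self E q
          · have hlt : m q < m p := by
              apply Finset.card_lt_card
              rw [Finset.ssubset_iff_of_subset]
              · refine ⟨q, Finset.mem_filter.mpr ⟨hqP, habs⟩, ?_⟩
                simp [Finset.mem_filter]
              · intro z hz
                rw [Finset.mem_filter] at hz ⊢
                exact ⟨hz.1, hz.2.trans habs⟩
            exact IH (m q) (hmp ▸ hlt) q hqP rfl
        rcases hqy with ⟨h1, h2⟩ | ⟨h1, h2⟩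
        · exact extend_up hconnq h1 h2.le hqe'
        · exact extend_down hconnq h2 h1.le hqe'

end
end

section
/- There exists a finite point set P in the plane and a rotation angle θ such that the rectangle of influence graph of P with respect to the axes rotated by θ has strictly smaller cost than the rectangle of influence graph of P with respect to the standard axes, where cost is the sum of Euclidean edge lengths. (I.e., the minimum-cost uniform 2D-monotone spanning graph can require a non-standard choice of axes.) -/
open scoped BigOperators

noncomputable section

-- auxiliary
noncomputable def pA : Pt := (WithLp.equiv 2 (Fin 2 → ℝ)).symm ![0, 0]
noncomputable def pB : Pt := (WithLp.equiv 2 (Fin 2 → ℝ)).symm ![1, 1/2]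
noncomputable def pC : Pt := (WithLp.equiv 2 (Fin 2 → ℝ)).symm ![2, 0]

lemma pA0 : pA 0 = 0 := rfl
lemma pA1 : pA 1 = 0 := rfl
lemma pB0 : pB 0 = 1 := rfl
lemma pB1 : pB 1 = 1/2 := rfl
lemma pC0 : pC 0 = 2 := rfl
lemma pC1 : pC 1 = 0 := rfl

lemma hAB : pA ≠ pB := by
  intro h; have h2 : (0:ℝ) = 1 := congrArg (fun z : Pt => z 0) h; norm_num at h2
lemma hAC : pA ≠ pC := by
  intro h; have h2 : (0:ℝ) = 2 := congrArg (fun z : Pt => z 0) h; norm_num at h2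
lemma hBC : pB ≠ pC := by
  intro h; have h2 : (1:ℝ) = 2 := congrArg (fun z : Pt => z 0) h; norm_num at h2

def Pset : Finset Pt := {pA, pB, pC}

lemma RectRot_comm (θ : ℝ) (p q : Pt) : RectRot θ p q = RectRot θ q p := by
  unfold RectRot
  ext z
  simp only [Set.mem_setOf_eq]
  rw [min_comm, max_comm, min_comm (rotY θ p), max_comm (rotY θ p)]

lemma RIGrotAdj_symm {θ : ℝ} {P : Finset Pt} {a b : Pt}
    (h : RIGrotAdj θ P a b) : RIGrotAdj θ P b a := by
  obtain ⟨h1, h2, h3, h4⟩ := h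
  exact ⟨h2, h1, h3.symm, fun r hr hrect => (h4 r hr (by rwa [RectRot_comm])).symm⟩

lemma sqrt2_pos : (0:ℝ) < Real.sqrt 2 := by positivity

-- θ = 0 visibility lemmas
lemma adjAB0 : RIGrotAdj 0 Pset pA pB := by
  refine ⟨by simp [Pset], by simp [Pset], hAB, ?_⟩
  intro r hr hrect
  simp only [Pset, Finset.mem_insert, Finset.mem_singleton] at hr
  rcases hr with h | h | h
  · exact Or.inl h
  · exact Or.inr h
  · subst h
    exfalso
    simp only [RectRot, rotX, rotY, Set.mem_setOf_eq, pA0, pA1, pB0, pB1, pC0, pC1,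
      Real.cos_zero, Real.sin_zero] at hrect
    norm_num at hrect

lemma adjBC0 : RIGrotAdj 0 Pset pB pC := by
  refine ⟨by simp [Pset], by simp [Pset], hBC, ?_⟩
  intro r hr hrect
  simp only [Pset, Finset.mem_insert, Finset.mem_singleton] at hr
  rcases hr with h | h | h
  · subst h
    exfalso
    simp only [RectRot, rotX, rotY, Set.mem_setOf_eq, pA0, pA1, pB0, pB1, pC0, pC1,
      Real.cos_zero, Real.sin_zero] at hrect
    norm_num at hrect
  · exact Or.inl h
  · exact Or.inr h

lemma adjAC0 : RIGrotAdj 0 Pset pA pC := by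
  refine ⟨by simp [Pset], by simp [Pset], hAC, ?_⟩
  intro r hr hrect
  simp only [Pset, Finset.mem_insert, Finset.mem_singleton] at hr
  rcases hr with h | h | h
  · exact Or.inl h
  · subst h
    exfalso
    simp only [RectRot, rotX, rotY, Set.mem_setOf_eq, pA0, pA1, pB0, pB1, pC0, pC1,
      Real.cos_zero, Real.sin_zero] at hrect
    norm_num at hrect
  · exact Or.inr h

-- θ = π/4 lemmas
lemma adjABθ : RIGrotAdj (Real.pi/4) Pset pA pB := by
  refine ⟨by simp [Pset], by simp [Pset], hAB, ?_⟩
  intro r hr hrect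
  simp only [Pset, Finset.mem_insert, Finset.mem_singleton] at hr
  rcases hr with h | h | h
  · exact Or.inl h
  · exact Or.inr h
  · subst h
    exfalso
    have hc := sqrt2_pos
    simp only [RectRot, rotX, rotY, Set.mem_setOf_eq, pA0, pA1, pB0, pB1, pC0, pC1,
      Real.cos_pi_div_four, Real.sin_pi_div_four] at hrect
    obtain ⟨-, h2, -, -⟩ := hrect
    rcases le_max_iff.mp h2 with h | h <;> nlinarith

lemma adjBCθ : RIGrotAdj (Real.pi/4) Pset pB pC := by
  refine ⟨by simp [Pset], by simp [Pset], hBC, ?_⟩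
  intro r hr hrect
  simp only [Pset, Finset.mem_insert, Finset.mem_singleton] at hr
  rcases hr with h | h | h
  · subst h
    exfalso
    have hc := sqrt2_pos
    simp only [RectRot, rotX, rotY, Set.mem_setOf_eq, pA0, pA1, pB0, pB1, pC0, pC1,
      Real.cos_pi_div_four, Real.sin_pi_div_four] at hrect
    obtain ⟨h1, -, -, -⟩ := hrect
    rcases min_le_iff.mp h1 with h | h <;> nlinarith
  · exact Or.inl h
  · exact Or.inr h

lemma memBθ : pB ∈ RectRot (Real.pi/4) pA pC := by
  have hc := sqrt2_pos
  simp only [RectRot, rotX, rotY, Set.mem_setOf_eq, pA0, pA1, pB0, pB1, pC0, pC1,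
    Real.cos_pi_div_four, Real.sin_pi_div_four]
  refine ⟨min_le_iff.mpr (Or.inl (by nlinarith)), le_max_iff.mpr (Or.inr (by nlinarith)),
    min_le_iff.mpr (Or.inr (by nlinarith)), le_max_iff.mpr (Or.inl (by nlinarith))⟩

lemma notadjACθ : ¬ RIGrotAdj (Real.pi/4) Pset pA pC := by
  rintro ⟨-, -, -, h4⟩
  have := h4 pB (by simp [Pset]) memBθ
  rcases this with h | h
  · exact hAB h.symm
  · exact hBC h

/-- for some point set, the rectangle of influence graph w.r.t. some
rotated axes has strictly smaller cost than the one w.r.t. the standard axes. -/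
theorem rotated_rig_can_have_smaller_cost :
    ∃ (P : Finset Pt) (θ : ℝ) (E0 Eθ : Finset (Sym2 Pt)),
      (∀ a b : Pt, s(a, b) ∈ E0 ↔ RIGrotAdj 0 P a b) ∧
      (∀ a b : Pt, s(a, b) ∈ Eθ ↔ RIGrotAdj θ P a b) ∧
      cost Eθ < cost E0 := by
  refine ⟨Pset, Real.pi/4, insert s(pA, pC) {s(pA, pB), s(pB, pC)},
    {s(pA, pB), s(pB, pC)}, ?_, ?_, ?_⟩
  · intro a b
    constructor
    · intro h
      simp only [Finset.mem_insert, Finset.mem_singleton, Sym2.eq_iff] at h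
      rcases h with (⟨ha, hb⟩ | ⟨ha, hb⟩) | (⟨ha, hb⟩ | ⟨ha, hb⟩) | (⟨ha, hb⟩ | ⟨ha, hb⟩) <;>
        subst ha <;> subst hb
      · exact adjAC0
      · exact RIGrotAdj_symm adjAC0
      · exact adjAB0
      · exact RIGrotAdj_symm adjAB0
      · exact adjBC0
      · exact RIGrotAdj_symm adjBC0
    · rintro ⟨ha, hb, hne, -⟩
      simp only [Pset, Finset.mem_insert, Finset.mem_singleton] at ha hb
      simp only [Finset.mem_insert, Finset.mem_singleton, Sym2.eq_iff]
      rcases ha with ha | ha | ha <;> rcases hb with hb | hb | hb <;> subst ha <;> subst hb <;>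
        simp_all
  · intro a b
    constructor
    · intro h
      simp only [Finset.mem_insert, Finset.mem_singleton, Sym2.eq_iff] at h
      rcases h with (⟨ha, hb⟩ | ⟨ha, hb⟩) | (⟨ha, hb⟩ | ⟨ha, hb⟩) <;> subst ha <;> subst hb
      · exact adjABθ
      · exact RIGrotAdj_symm adjABθ
      · exact adjBCθ
      · exact RIGrotAdj_symm adjBCθ
    · rintro ⟨ha, hb, hne, hvis⟩
      simp only [Pset, Finset.mem_insert, Finset.mem_singleton] at ha hb
      simp only [Finset.mem_insert, Finset.mem_singleton, Sym2.eq_iff]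
      rcases ha with ha | ha | ha <;> rcases hb with hb | hb | hb <;> subst ha <;> subst hb <;>
        simp_all
      · -- a = pA, b = pC : contradiction
        exfalso
        rcases hvis pB (by simp [Pset]) memBθ with h | h
        · exact hAB h.symm
        · exact hBC h
      · -- a = pC, b = pA
        exfalso
        rcases hvis pB (by simp [Pset]) (by rw [RectRot_comm]; exact memBθ) with h | h
        · exact hBC h
        · exact hAB h.symm
  · have hnotmem : s(pA, pC) ∉ ({s(pA, pB), s(pB, pC)} : Finset (Sym2 Pt)) := by
      simp only [Finset.mem_insert, Finset.mem_singleton, Sym2.eq_iff]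
      rintro ((⟨-, h⟩ | ⟨h, -⟩) | (⟨h, -⟩ | ⟨h, -⟩))
      · exact hBC h.symm
      · exact hAB h
      · exact hAB h
      · exact hAC h
    unfold cost
    rw [Finset.sum_insert hnotmem]
    have : (0:ℝ) < dist pA pC := dist_pos.mpr hAC
    simp only [Sym2.lift_mk]
    linarith


end
end
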